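/- Let O be a Dedekind domain, μ a nonzero ideal with μ² = (z), and A = O·1 ⊕ μ·X with X² = z⁻¹ā X + z⁻¹b̄. If there exists u ∈ μ such that −b̄ + u(ā + u)/z is a unit of O, then ker(m : A ⊗_O A → A) is generated as an A-module by the single element X̂ − X_u, hence ker(m) ≅ A as A-modules. -/

import Mathlib

/-- The element of `K⁴` (coordinates `1⊗1, 1⊗X, X⊗1, X⊗X`) representing `p ⊗ q`. -/
def tens {K : Type*} [Field K] (p q : K × K) : Fin 4 → K :=
  ![p.1 * q.1, p.1 * q.2, p.2 * q.1, p.2 * q.2]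

/-- The multiplication map `m : K² ⊗ K² → K²` for `X² = aX + b`, in coordinates. -/
noncomputable def mulMap {K : Type*} [Field K] (a b : K) : (Fin 4 → K) →ₗ[K] K × K :=
  LinearMap.prod
    ((LinearMap.proj (0 : Fin 4) : (Fin 4 → K) →ₗ[K] K) +
      b • (LinearMap.proj (3 : Fin 4) : (Fin 4 → K) →ₗ[K] K))
    ((LinearMap.proj (1 : Fin 4) : (Fin 4 → K) →ₗ[K] K) +
      (LinearMap.proj (2 : Fin 4) : (Fin 4 → K) →ₗ[K] K) +
      a • (LinearMap.proj (3 : Fin 4) : (Fin 4 → K) →ₗ[K] K))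

/-- `X_v = vX ⊗ 1 − 1 ⊗ vX` in coordinates. -/
def Xel {K : Type*} [Field K] (v : K) : Fin 4 → K := ![0, -v, v, 0]

/-- Left multiplication `ℓ_x` by `x = x₁·1 + x₂·X` on the first tensor factor,
in the coordinates `1⊗1, 1⊗X, X⊗1, X⊗X`, for `X² = aX + b`. -/
def ellOp {K : Type*} [Field K] (a b : K) (x : K × K) (c : Fin 4 → K) : Fin 4 → K :=
  ![x.1 * c 0 + b * (x.2 * c 2), x.1 * c 1 + b * (x.2 * c 3),
    x.2 * c 0 + x.1 * c 2 + a * (x.2 * c 2), x.2 * c 1 + x.1 * c 3 + a * (x.2 * c 3)]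


/-!
`ℓ_x` is left multiplication by `x` on the first tensor factor and `m` is `A`-linear, so
`m(ℓ_x X̃) = x · m(X̃) = 0`. An element of `ker m` is determined by its coordinates at `1⊗X`
and `X⊗X`; those of `ℓ_x X̃` are obtained from `x = (x₁, x₂)` by the matrix
`[[u₀, b̄], [z, ā + u₀]]`, whose determinant is `z(−b̄ + w)` with `w = u₀(ā + u₀)/z`. This gives
injectivity. For `c ∈ A ⊗ A` the `1⊗X`-coordinate lies in `μ` and the `X⊗X`-coordinate in
`μ² = (z)`, and since `−b̄ + w` is a unit, Cramer's rule gives a solution with `x₁ ∈ O` and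
`x₂ ∈ μ`.
-/

section QuadraticAlgebra

variable {K : Type*} [Field K]

/-- Multiplication in `K[X]/(X² − aX − b)` in the coordinates `1, X`. -/
def quadMul (a b : K) (x p : K × K) : K × K :=
  (x.1 * p.1 + b * (x.2 * p.2), x.2 * p.1 + x.1 * p.2 + a * (x.2 * p.2))

@[simp]
theorem quadMul_zero (a b : K) (x : K × K) : quadMul a b x 0 = 0 := by
  simp [quadMul]

theorem ellOp_tens (a b : K) (x p q : K × K) :
    ellOp a b x (tens p q) = tens (quadMul a b x p) q := by
  ext i; fin_cases i <;> simp [ellOp, tens, quadMul] <;> ring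

def ellLin (a b : K) (x : K × K) : (Fin 4 → K) →ₗ[K] (Fin 4 → K) where
  toFun := ellOp a b x
  map_add' c c' := by ext i; fin_cases i <;> simp [ellOp] <;> ring
  map_smul' r c := by ext i; fin_cases i <;> simp [ellOp] <;> ring

theorem mulMap_apply (a b : K) (c : Fin 4 → K) :
    mulMap a b c = (c 0 + b * c 3, c 1 + c 2 + a * c 3) := by
  simp [mulMap]

theorem mulMap_ellOp (a b : K) (x : K × K) (c : Fin 4 → K) :
    mulMap a b (ellOp a b x c) = quadMul a b x (mulMap a b c) := by
  simp only [mulMap_apply, ellOp, quadMul]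
  ext <;> simp <;> ring

theorem ext_of_mulMap_eq_zero {a b : K} {c c' : Fin 4 → K} (hc : mulMap a b c = 0)
    (hc' : mulMap a b c' = 0) (h1 : c 1 = c' 1) (h3 : c 3 = c' 3) : c = c' := by
  simp only [mulMap_apply, Prod.ext_iff, Prod.fst_zero, Prod.snd_zero] at hc hc'
  have h0 : c 0 = c' 0 := by linear_combination hc.1 - hc'.1 - b * h3
  have h2 : c 2 = c' 2 := by linear_combination hc.2 - hc'.2 - h1 - a * h3
  ext i; fin_cases i <;> assumption

theorem Xel_eq_tens_sub (v : K) : Xel v = tens (0, v) (1, 0) - tens (1, 0) (0, v) := by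
  ext i; fin_cases i <;> simp [Xel, tens]

/-- `z X⊗X − ā X⊗1 − b̄ 1⊗1 − X_v`, the element `X̂ − X_v` once `∑ uⱼu'ⱼ = z` is used. -/
def kerGen (a b v z : K) : Fin 4 → K := ![-b, v, -a - v, z]

theorem xhat_sub_Xel_eq {k : ℕ} {u u' : Fin k → K} {z : K} (hsum : ∑ j, u j * u' j = z)
    (a b v : K) :
    (∑ j, tens (0, u j) (0, u' j)) - (tens (0, a) (1, 0) + tens (b, 0) (1, 0)) - Xel v =
      kerGen a b v z := by
  ext i
  simp only [Pi.sub_apply, Pi.add_apply, Finset.sum_apply]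
  fin_cases i <;> simp [tens, Xel, kerGen, ← hsum]

variable {a b v z : K}

theorem mulMap_kerGen (hz : z ≠ 0) : mulMap (a / z) (b / z) (kerGen a b v z) = 0 := by
  simp [mulMap_apply, kerGen, div_mul_cancel₀ _ hz]

theorem ellOp_kerGen_one (hz : z ≠ 0) (x : K × K) :
    ellOp (a / z) (b / z) x (kerGen a b v z) 1 = x.1 * v + b * x.2 := by
  simp only [ellOp, kerGen, Fin.isValue, Matrix.cons_val_zero, mul_neg, Matrix.cons_val,
    Matrix.cons_val_one, add_right_inj]
  field_simp

theorem ellOp_kerGen_three (hz : z ≠ 0) (x : K × K) :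
    ellOp (a / z) (b / z) x (kerGen a b v z) 3 = x.1 * z + x.2 * (a + v) := by
  simp only [ellOp, kerGen, Fin.isValue, Matrix.cons_val_zero, mul_neg, Matrix.cons_val,
    Matrix.cons_val_one]
  field_simp
  ring

theorem ellOp_kerGen_injective (hz : z ≠ 0) (hdet : v * (a + v) - b * z ≠ 0) :
    Function.Injective fun x : K × K => ellOp (a / z) (b / z) x (kerGen a b v z) := by
  intro x y h
  have h1 := congrFun h 1
  have h3 := congrFun h 3
  simp only [ellOp_kerGen_one hz, ellOp_kerGen_three hz] at h1 h3
  have e1 : (x.1 - y.1) * (v * (a + v) - b * z) = 0 := by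
    linear_combination (a + v) * h1 - b * h3
  have e2 : (x.2 - y.2) * (v * (a + v) - b * z) = 0 := by
    linear_combination v * h3 - z * h1
  exact Prod.ext (sub_eq_zero.mp ((mul_eq_zero.mp e1).resolve_right hdet))
    (sub_eq_zero.mp ((mul_eq_zero.mp e2).resolve_right hdet))

end QuadraticAlgebra

section Order

variable {O K : Type*} [CommRing O] [Field K] [Algebra O K]

/-- The image of `A ⊗_O A` in the coordinates of `tens`. -/
def tensSquare (A : Submodule O (K × K)) : Submodule O (Fin 4 → K) :=
  Submodule.span O {w | ∃ p ∈ A, ∃ q ∈ A, w = tens p q}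

theorem tens_mem_tensSquare {A : Submodule O (K × K)} {p q : K × K} (hp : p ∈ A) (hq : q ∈ A) :
    tens p q ∈ tensSquare A :=
  Submodule.subset_span ⟨p, hp, q, hq, rfl⟩

theorem ellOp_mem_tensSquare {a b : K} {A : Submodule O (K × K)}
    (hA : ∀ x ∈ A, ∀ p ∈ A, quadMul a b x p ∈ A) {x : K × K} (hx : x ∈ A)
    {c : Fin 4 → K} (hc : c ∈ tensSquare A) : ellOp a b x c ∈ tensSquare A := by
  have : tensSquare A ≤ (tensSquare A).comap ((ellLin a b x).restrictScalars O) :=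
    Submodule.span_le.mpr <| by
      rintro _ ⟨p, hp, q, hq, rfl⟩
      simpa [ellLin, ellOp_tens] using tens_mem_tensSquare (hA x hx p hp) hq
  exact this hc

variable (O K) in
/-- `O·1 ⊕ μ·X`. -/
def quadOrder (μ : Ideal O) : Submodule O (K × K) :=
  (LinearMap.range (Algebra.linearMap O K)).prod (Submodule.map (Algebra.linearMap O K) μ)

theorem mem_quadOrder {μ : Ideal O} {x : K × K} :
    x ∈ quadOrder O K μ ↔ (∃ r, algebraMap O K r = x.1) ∧ ∃ m ∈ μ, algebraMap O K m = x.2 := by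
  simp [quadOrder, Submodule.mem_prod]

theorem quadMul_mem_quadOrder {μ : Ideal O} {z a b : O} (hsq : μ * μ = Ideal.span {z})
    (ha : a ∈ μ) (hz : algebraMap O K z ≠ 0) :
    ∀ x ∈ quadOrder O K μ, ∀ p ∈ quadOrder O K μ,
      quadMul (algebraMap O K a / algebraMap O K z) (algebraMap O K b / algebraMap O K z) x p ∈
        quadOrder O K μ := by
  rintro ⟨x₁, x₂⟩ hx ⟨p₁, p₂⟩ hp
  obtain ⟨⟨o, rfl⟩, m, hm, rfl⟩ := mem_quadOrder.mp hx
  obtain ⟨⟨o', rfl⟩, m', hm', rfl⟩ := mem_quadOrder.mp hp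
  obtain ⟨t, ht⟩ := Ideal.mem_span_singleton'.mp (hsq ▸ Ideal.mul_mem_mul hm hm')
  have htK : algebraMap O K m * algebraMap O K m' = algebraMap O K t * algebraMap O K z := by
    rw [← map_mul, ← map_mul, ht]
  refine mem_quadOrder.mpr ⟨⟨o * o' + b * t, ?_⟩, m * o' + o * m' + a * t,
    add_mem (add_mem (μ.mul_mem_right _ hm) (μ.mul_mem_left _ hm')) (μ.mul_mem_right _ ha), ?_⟩
  all_goals
    simp only [quadMul, map_add, map_mul, htK]
    field_simp

theorem tensSquare_quadOrder_le (μ : Ideal O) :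
    tensSquare (quadOrder O K μ) ≤
      (Submodule.map (Algebra.linearMap O K) μ).comap (LinearMap.proj 1) ⊓
        (Submodule.map (Algebra.linearMap O K) (μ * μ)).comap (LinearMap.proj 3) := by
  refine Submodule.span_le.mpr ?_
  rintro _ ⟨⟨p₁, p₂⟩, hp, ⟨q₁, q₂⟩, hq, rfl⟩
  obtain ⟨⟨o, rfl⟩, m, hm, rfl⟩ := mem_quadOrder.mp hp
  obtain ⟨-, m', hm', rfl⟩ := mem_quadOrder.mp hq
  exact ⟨⟨o * m', μ.mul_mem_left o hm', by simp [tens]⟩,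
    ⟨m * m', Ideal.mul_mem_mul hm hm', by simp [tens]⟩⟩

theorem xhat_sub_Xel_mem_tensSquare {μ : Ideal O} {k : ℕ} {u u' : Fin k → O}
    (hu : ∀ j, u j ∈ μ) (hu' : ∀ j, u' j ∈ μ) {a v : O} (ha : a ∈ μ) (hv : v ∈ μ) (b : O) :
    (∑ j, tens (0, algebraMap O K (u j)) (0, algebraMap O K (u' j))) -
        (tens (0, algebraMap O K a) (1, 0) + tens (algebraMap O K b, 0) (1, 0)) -
        Xel (algebraMap O K v) ∈ tensSquare (quadOrder O K μ) := by
  have hX : ∀ m ∈ μ, ((0 : K), algebraMap O K m) ∈ quadOrder O K μ := fun m hm =>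
    mem_quadOrder.mpr ⟨⟨0, map_zero _⟩, m, hm, rfl⟩
  have h1 : ((1 : K), (0 : K)) ∈ quadOrder O K μ :=
    mem_quadOrder.mpr ⟨⟨1, map_one _⟩, 0, μ.zero_mem, map_zero _⟩
  have hb : (algebraMap O K b, (0 : K)) ∈ quadOrder O K μ :=
    mem_quadOrder.mpr ⟨⟨b, rfl⟩, 0, μ.zero_mem, map_zero _⟩
  rw [Xel_eq_tens_sub]
  exact sub_mem (sub_mem
    (Submodule.sum_mem _ fun j _ => tens_mem_tensSquare (hX _ (hu j)) (hX _ (hu' j)))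
    (add_mem (tens_mem_tensSquare (hX _ ha) h1) (tens_mem_tensSquare hb h1)))
    (sub_mem (tens_mem_tensSquare (hX _ hv) h1) (tens_mem_tensSquare h1 (hX _ hv)))

theorem exists_coords_solution [IsDomain O] {μ : Ideal O} {z a b v w : O} (hz : z ≠ 0)
    (hsq : μ * μ = Ideal.span {z}) (ha : a ∈ μ) (hv : v ∈ μ) (hw : w * z = v * (a + v))
    (hunit : IsUnit (-b + w)) {m : O} (hm : m ∈ μ) (t : O) :
    ∃ x₁ x₂, x₂ ∈ μ ∧ x₁ * v + b * x₂ = m ∧ x₁ * z + x₂ * (a + v) = t * z := by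
  obtain ⟨s, hs⟩ := Ideal.mem_span_singleton'.mp (hsq ▸ Ideal.mul_mem_mul (add_mem ha hv) hm)
  obtain ⟨e, he⟩ := hunit.exists_left_inv
  refine ⟨e * (s - b * t), e * (v * t - m), μ.mul_mem_left _ (sub_mem (μ.mul_mem_right _ hv) hm),
    mul_right_cancel₀ hz ?_, ?_⟩
  · linear_combination v * e * hs - e * m * hw + m * z * he
  · linear_combination e * hs - e * t * hw + t * z * he

theorem exists_mem_quadOrder_ellOp_kerGen_eq [IsDomain O] [IsFractionRing O K] {μ : Ideal O}
    {z a b v w : O} (hz : z ≠ 0)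
    (hsq : μ * μ = Ideal.span {z}) (ha : a ∈ μ) (hv : v ∈ μ) (hw : w * z = v * (a + v))
    (hunit : IsUnit (-b + w)) {c : Fin 4 → K} (hc : c ∈ tensSquare (quadOrder O K μ))
    (hmc : mulMap (algebraMap O K a / algebraMap O K z) (algebraMap O K b / algebraMap O K z) c =
      0) :
    ∃ x ∈ quadOrder O K μ,
      ellOp (algebraMap O K a / algebraMap O K z) (algebraMap O K b / algebraMap O K z) x
        (kerGen (algebraMap O K a) (algebraMap O K b) (algebraMap O K v) (algebraMap O K z)) = c := by
  have hfz : algebraMap O K z ≠ 0 := (map_ne_zero_iff _ (IsFractionRing.injective O K)).mpr hz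
  obtain ⟨⟨m, hm, hm1⟩, y, hy, hy3⟩ := tensSquare_quadOrder_le μ hc
  rw [hsq] at hy
  obtain ⟨t, rfl⟩ := Ideal.mem_span_singleton'.mp hy
  obtain ⟨x₁, x₂, hx₂, e₁, e₃⟩ := exists_coords_solution hz hsq ha hv hw hunit hm t
  refine ⟨(algebraMap O K x₁, algebraMap O K x₂), mem_quadOrder.mpr ⟨⟨x₁, rfl⟩, x₂, hx₂, rfl⟩,
    ext_of_mulMap_eq_zero ?_ hmc ?_ ?_⟩
  · rw [mulMap_ellOp, mulMap_kerGen hfz, quadMul_zero]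
  · rw [ellOp_kerGen_one hfz]
    simpa [← e₁] using hm1
  · rw [ellOp_kerGen_three hfz]
    simpa [← e₃] using hy3

end Order

theorem stmt10_general (O : Type*) [CommRing O] [IsDomain O]
    (K : Type*) [Field K] [Algebra O K] [IsFractionRing O K]
    (μ : Ideal O) (hμ : μ ≠ ⊥)
    (z : O) (hsq : μ * μ = Ideal.span {z})
    (abar bbar : O) (habar : abar ∈ μ)
    (u0 : O) (hu0 : u0 ∈ μ) (w : O) (hw : w * z = u0 * (abar + u0))
    (hunit : IsUnit (-bbar + w))
    (k : ℕ) (u u' : Fin k → O)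
    (hu : ∀ j, u j ∈ μ) (hu' : ∀ j, u' j ∈ μ)
    (hsum : ∑ j, u j * u' j = z) :
    let f : O → K := algebraMap O K
    let a : K := f abar / f z
    let b : K := f bbar / f z
    let O1 : Submodule O K := LinearMap.range (Algebra.linearMap O K)
    let μK : Submodule O K := Submodule.map (Algebra.linearMap O K) μ
    let A : Submodule O (K × K) := O1.prod μK
    let AA : Submodule O (Fin 4 → K) :=
      Submodule.span O {w | ∃ p ∈ A, ∃ q ∈ A, w = tens p q}
    let Kerm : Submodule O (Fin 4 → K) :=
      AA ⊓ LinearMap.ker ((mulMap a b).restrictScalars O)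
    let Xhat : Fin 4 → K :=
      (∑ j, tens ((0 : K), f (u j)) ((0 : K), f (u' j))) -
        (tens ((0 : K), f abar) ((1 : K), (0 : K)) +
          tens (f bbar, (0 : K)) ((1 : K), (0 : K)))
    let Xtil : Fin 4 → K := Xhat - Xel (f u0)
    (∀ x : A, ellOp a b (x : K × K) Xtil ∈ Kerm) ∧
    Function.Injective (fun x : A => ellOp a b (x : K × K) Xtil) ∧
    ∀ c ∈ Kerm, ∃ x ∈ A, ellOp a b x Xtil = c := by
  intro f a b O1 μK A AA Kerm Xhat Xtil
  have hz : z ≠ 0 := fun h => hμ (by simpa [h] using hsq)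
  have hf : Function.Injective f := IsFractionRing.injective O K
  have hfz : f z ≠ 0 := (map_ne_zero_iff _ hf).mpr hz
  have hXtil : Xtil = kerGen (f abar) (f bbar) (f u0) (f z) :=
    xhat_sub_Xel_eq (u := fun j => f (u j)) (u' := fun j => f (u' j))
      (by simp only [f, ← hsum, map_sum, map_mul]) _ _ _
  have hdet : f u0 * (f abar + f u0) - f bbar * f z ≠ 0 := by
    have h : f ((-bbar + w) * z) = f u0 * (f abar + f u0) - f bbar * f z := by
      simp only [f, add_mul, hw, neg_mul, map_add, map_neg, map_mul]
      ring
    exact h ▸ (map_ne_zero_iff _ hf).mpr (mul_ne_zero hunit.ne_zero hz)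
  refine ⟨fun x => ⟨?_, ?_⟩, fun x y h => Subtype.ext (ellOp_kerGen_injective hfz hdet ?_),
    fun c hc => hXtil ▸ exists_mem_quadOrder_ellOp_kerGen_eq hz hsq habar hu0 hw hunit hc.1 hc.2⟩
  · exact ellOp_mem_tensSquare (quadMul_mem_quadOrder hsq habar hfz) x.2
      (xhat_sub_Xel_mem_tensSquare hu hu' habar hu0 bbar)
  · change mulMap a b _ = 0
    rw [mulMap_ellOp, hXtil, mulMap_kerGen hfz, quadMul_zero]
  · simpa only [hXtil] using h

/-- If for some `u₀ ∈ μ` the element `−b̄ + u₀(ā + u₀)/z ∈ O` is a unit, then `ker(m)`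
is generated as an `A`-module by the single element `X̃ = X̂ − X_{u₀}`, and the map
`A → ker(m)`, `x ↦ ℓ_x(X̃)`, is bijective, so `ker(m) ≅ A` as `A`-modules; here `A`
acts through the left tensor factor and `ker(m) = AA ⊓ ker(mulMap)`. -/
theorem stmt10 (O : Type*) [CommRing O] [IsDomain O] [IsDedekindDomain O]
    (K : Type*) [Field K] [Algebra O K] [IsFractionRing O K]
    (μ : Ideal O) (hμ : μ ≠ ⊥)
    (z : O) (hsq : μ * μ = Ideal.span {z})
    (abar bbar : O) (habar : abar ∈ μ)
    (u0 : O) (hu0 : u0 ∈ μ) (w : O) (hw : w * z = u0 * (abar + u0))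
    (hunit : IsUnit (-bbar + w))
    (k : ℕ) (u u' : Fin k → O)
    (hu : ∀ j, u j ∈ μ) (hu' : ∀ j, u' j ∈ μ)
    (hspan : Ideal.span (Set.range u) = μ)
    (hsum : ∑ j, u j * u' j = z) :
    let f : O → K := algebraMap O K
    let a : K := f abar / f z
    let b : K := f bbar / f z
    let O1 : Submodule O K := LinearMap.range (Algebra.linearMap O K)
    let μK : Submodule O K := Submodule.map (Algebra.linearMap O K) μ
    let A : Submodule O (K × K) := O1.prod μK
    let AA : Submodule O (Fin 4 → K) :=
      Submodule.span O {w | ∃ p ∈ A, ∃ q ∈ A, w = tens p q}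
    let Kerm : Submodule O (Fin 4 → K) :=
      AA ⊓ LinearMap.ker ((mulMap a b).restrictScalars O)
    let Xhat : Fin 4 → K :=
      (∑ j, tens ((0 : K), f (u j)) ((0 : K), f (u' j))) -
        (tens ((0 : K), f abar) ((1 : K), (0 : K)) +
          tens (f bbar, (0 : K)) ((1 : K), (0 : K)))
    let Xtil : Fin 4 → K := Xhat - Xel (f u0)
    (∀ x : A, ellOp a b (x : K × K) Xtil ∈ Kerm) ∧
    Function.Injective (fun x : A => ellOp a b (x : K × K) Xtil) ∧
    ∀ c ∈ Kerm, ∃ x ∈ A, ellOp a b x Xtil = c :=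
  stmt10_general O K μ hμ z hsq abar bbar habar u0 hu0 w hw hunit k u u' hu hu' hsum
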